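/- For all i ≥ 3, the number of distinct nonempty palindromic factors of W_i equals ⌊5i/2⌋ - 2. -/

import Mathlib

/-!
Along `W n` consecutive letters either rise by one or drop to an even letter `≥ 2`; a drop is
followed by a rise and a strict drop by two rises (`ZWWShape`). This local shape survives the
recursion `W (n + 2) = W (n + 1) ++ (W n + 2)`, because `W (n + 1)` ends in `x, y, y + 1` with
`x ≤ y` and `W n + 2` starts with `2, 3, 4`. The shape forbids palindromes of length 4 and 5,
hence all palindromes longer than 3, and pins the remaining ones down to `x` (`x ≤ i`), `x x`
(`x` even, `2 ≤ x < i`) and `x (x+1) x`, `(x+1) x (x+1)` (`x` even, `2 ≤ x`, `x + 2 ≤ i`).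
All of them occur, as shifts by even amounts of factors of `W 3` and `W 4`, and there are
`(i + 1) + ⌊(i - 1) / 2⌋ + 2 ⌊(i - 2) / 2⌋ = ⌊5i/2⌋ - 2` of them.
-/

/-- The morphism `phi` on the alphabet `ℕ`: `phi (2i) = (2i)(2i+1)` and `phi (2i+1) = (2i+2)`. -/
def phi (a : ℕ) : List ℕ := if a % 2 = 0 then [a, a + 1] else [a + 1]

/-- The finite ZWW words: `W n = phi^n(0)`, so `W 0 = 0`, `W 1 = 01`, `W 2 = 012`, `W 3 = 01223`. -/
def W (n : ℕ) : List ℕ := (fun w => w.flatMap phi)^[n] [0]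

theorem List.infix_append_append_of_length_le {α : Type*} {u s p q t : List α}
    (hu : u <:+: s ++ p ++ (q ++ t)) (hp : u.length ≤ p.length + 1)
    (hq : u.length ≤ q.length + 1) :
    u <:+: s ++ p ∨ u <:+: q ++ t ∨
      ∃ l₁ l₂, l₁ ≠ [] ∧ l₂ ≠ [] ∧ u = l₁ ++ l₂ ∧ l₁ <:+ p ∧ l₂ <+: q := by
  rcases List.infix_append_iff_ne_nil.mp hu with h | h | ⟨l₁, l₂, h₁, h₂, rfl, hl₁, hl₂⟩
  · exact Or.inl h
  · exact Or.inr (Or.inl h)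
  · have len₁ := List.length_pos_iff.mpr h₁
    have len₂ := List.length_pos_iff.mpr h₂
    rw [List.length_append] at hp hq
    exact Or.inr (Or.inr ⟨l₁, l₂, h₁, h₂, rfl,
      List.suffix_of_suffix_length_le hl₁ (List.suffix_append s p) (by omega),
      List.prefix_of_prefix_length_le hl₂ (List.prefix_append q t) (by omega)⟩)

theorem map_sub_two_infix_of_infix_map_add_two {u w : List ℕ} (h : u <:+: w.map (· + 2)) :
    u.map (· - 2) <:+: w ∧ ∀ x ∈ u, 2 ≤ x := by
  obtain ⟨l, hl, rfl⟩ := List.infix_map_iff.mp h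
  simpa [List.map_map, Function.comp_def] using hl

theorem W_succ (n : ℕ) : W (n + 1) = (W n).flatMap phi :=
  Function.iterate_succ_apply' _ n [0]

theorem phi_add_two (a : ℕ) : phi (a + 2) = (phi a).map (· + 2) := by
  by_cases h : a % 2 = 0 <;> simp [phi, h, Nat.add_mod_right]

theorem flatMap_phi_map_add_two (w : List ℕ) :
    (w.map (· + 2)).flatMap phi = (w.flatMap phi).map (· + 2) := by
  induction w with
  | nil => rfl
  | cons a w ih => simp [ih, phi_add_two]

theorem W_add_two (n : ℕ) : W (n + 2) = W (n + 1) ++ (W n).map (· + 2) := by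
  induction n with
  | zero => rfl
  | succ n ih =>
    rw [W_succ (n + 2), ih, List.flatMap_append, flatMap_phi_map_add_two, ← W_succ, ← W_succ]
    exact congrArg (· ++ _) ih

theorem W_prefix_succ (n : ℕ) : W n <+: W (n + 1) := by
  cases n with
  | zero => exact ⟨[1], rfl⟩
  | succ n => rw [W_add_two]; exact List.prefix_append _ _

theorem W_prefix_of_le {m n : ℕ} (h : m ≤ n) : W m <+: W n := by
  induction n, h using Nat.le_induction with
  | base => exact List.prefix_rfl
  | succ n _ ih => exact ih.trans (W_prefix_succ n)

theorem le_of_mem_W {a n : ℕ} (h : a ∈ W n) : a ≤ n := by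
  induction n generalizing a with
  | zero => simp_all [W]
  | succ n ih =>
    obtain ⟨b, hb, ha⟩ := List.mem_flatMap.mp (W_succ n ▸ h)
    have := ih hb
    by_cases hb2 : b % 2 = 0 <;> simp [phi, hb2] at ha <;> omega

theorem exists_W_eq_append_singleton (n : ℕ) : ∃ v, W n = v ++ [n] ∧ ∀ x ∈ v, x < n := by
  induction n using Nat.strong_induction_on with
  | _ n ih =>
    match n with
    | 0 => exact ⟨[], rfl, by simp⟩
    | 1 => exact ⟨[0], rfl, by simp⟩
    | m + 2 =>
      obtain ⟨v, hv, hvlt⟩ := ih m (by omega)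
      refine ⟨W (m + 1) ++ v.map (· + 2), by simp [W_add_two, hv], ?_⟩
      simp only [List.mem_append, List.mem_map]
      rintro x (hx | ⟨y, hy, rfl⟩)
      · have := le_of_mem_W hx; omega
      · have := hvlt y hy; omega

theorem mem_W {j n : ℕ} (h : j ≤ n) : j ∈ W n := by
  obtain ⟨v, hv, -⟩ := exists_W_eq_append_singleton j
  exact (W_prefix_of_le h).subset (by simp [hv])

theorem lt_of_pair_infix_W {a b n : ℕ} (h : [a, b] <:+: W n) : a < n := by
  obtain ⟨v, hv, hvlt⟩ := exists_W_eq_append_singleton n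
  obtain ⟨s, t, hst⟩ := h
  apply hvlt
  rw [show v = (W n).dropLast by simp [hv], ← hst]
  simp [List.dropLast_append_of_ne_nil]

theorem exists_W_add_two_eq_append (m : ℕ) :
    ∃ v x, W (m + 2) = v ++ [x, m + 1, m + 2] ∧ x ≤ m + 1 := by
  induction m using Nat.strong_induction_on with
  | _ m ih =>
    match m with
    | 0 => exact ⟨[], 0, rfl, by omega⟩
    | 1 => exact ⟨[0, 1], 2, rfl, by omega⟩
    | m + 2 =>
      obtain ⟨v, x, hv, hx⟩ := ih m (by omega)
      exact ⟨W (m + 3) ++ v.map (· + 2), x + 2, by simp [W_add_two (m + 2), hv], by omega⟩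

theorem exists_W_add_two_eq_cons (n : ℕ) : ∃ t, W (n + 2) = 0 :: 1 :: 2 :: t := by
  obtain ⟨t, ht⟩ := W_prefix_of_le (show 2 ≤ n + 2 by omega)
  exact ⟨t, ht.symm⟩

theorem map_add_two_mul_infix_W_add {u : List ℕ} {n : ℕ} (h : u <:+: W n) (k : ℕ) :
    u.map (· + 2 * k) <:+: W (n + 2 * k) := by
  induction k with
  | zero => simpa using h
  | succ k ih =>
    rw [show u.map (· + 2 * (k + 1)) = (u.map (· + 2 * k)).map (· + 2) by rw [List.map_map]; rfl,
      show n + 2 * (k + 1) = n + 2 * k + 2 by ring, W_add_two]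
    exact (ih.map _).trans List.infix_append_right

theorem map_add_two_mul_infix_W {u : List ℕ} {n k i : ℕ} (h : u <:+: W n)
    (hi : n + 2 * k ≤ i) : u.map (· + 2 * k) <:+: W i :=
  (map_add_two_mul_infix_W_add h k).trans (W_prefix_of_le hi).isInfix

structure ZWWShape (w : List ℕ) : Prop where
  step : ∀ a b, [a, b] <:+: w → b = a + 1 ∨ (2 ∣ b ∧ 2 ≤ b ∧ b ≤ a)
  rise_of_drop : ∀ a b c, [a, b, c] <:+: w → b ≤ a → c = b + 1
  rise_of_strict_drop : ∀ a b c d, [a, b, c, d] <:+: w → b < a → d = c + 1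

namespace ZWWShape

variable {u w : List ℕ}

theorem of_infix (h : ZWWShape w) (hu : u <:+: w) : ZWWShape u :=
  ⟨fun a b hab => h.step a b (hab.trans hu),
   fun a b c habc => h.rise_of_drop a b c (habc.trans hu),
   fun a b c d habcd => h.rise_of_strict_drop a b c d (habcd.trans hu)⟩

theorem map_add_two (h : ZWWShape w) : ZWWShape (w.map (· + 2)) := by
  refine ⟨fun a b hab => ?_, fun a b c habc => ?_, fun a b c d habcd => ?_⟩
  · obtain ⟨hl, hge⟩ := map_sub_two_infix_of_infix_map_add_two hab
    simp only [List.map_cons, List.map_nil, List.forall_mem_cons, List.not_mem_nil,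
      IsEmpty.forall_iff, implies_true, and_true] at hl hge
    have := h.step _ _ hl
    omega
  · obtain ⟨hl, hge⟩ := map_sub_two_infix_of_infix_map_add_two habc
    simp only [List.map_cons, List.map_nil, List.forall_mem_cons, List.not_mem_nil,
      IsEmpty.forall_iff, implies_true, and_true] at hl hge
    have := h.rise_of_drop _ _ _ hl
    omega
  · obtain ⟨hl, hge⟩ := map_sub_two_infix_of_infix_map_add_two habcd
    simp only [List.map_cons, List.map_nil, List.forall_mem_cons, List.not_mem_nil,
      IsEmpty.forall_iff, implies_true, and_true] at hl hge
    have := h.rise_of_strict_drop _ _ _ _ hl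
    omega

theorem append {s t : List ℕ} {x y : ℕ} (hs : ZWWShape (s ++ [x, y, y + 1]))
    (ht : ZWWShape (2 :: 3 :: 4 :: t)) (hxy : x ≤ y) (hy : 1 ≤ y) :
    ZWWShape (s ++ [x, y, y + 1] ++ 2 :: 3 :: 4 :: t) := by
  refine ⟨fun a b hab => ?_, fun a b c habc => ?_, fun a b c d habcd => ?_⟩
  · rcases List.infix_append_append_of_length_le (q := [2, 3, 4]) hab (by simp) (by simp) with
      h | h | ⟨l₁, l₂, h₁, h₂, he, hl₁, hl₂⟩
    · exact hs.step a b h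
    · exact ht.step a b h
    simp only [List.suffix_cons_iff, List.prefix_cons_iff, List.suffix_nil, List.prefix_nil] at hl₁ hl₂
    rcases hl₁ with rfl | rfl | rfl | rfl <;>
      rcases hl₂ with rfl | ⟨_, rfl, rfl | ⟨_, rfl, rfl | ⟨_, rfl, rfl⟩⟩⟩ <;> simp_all
  · rcases List.infix_append_append_of_length_le (q := [2, 3, 4]) habc (by simp) (by simp) with
      h | h | ⟨l₁, l₂, h₁, h₂, he, hl₁, hl₂⟩
    · exact hs.rise_of_drop a b c h
    · exact ht.rise_of_drop a b c h
    simp only [List.suffix_cons_iff, List.prefix_cons_iff, List.suffix_nil, List.prefix_nil] at hl₁ hl₂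
    rcases hl₁ with rfl | rfl | rfl | rfl <;>
      rcases hl₂ with rfl | ⟨_, rfl, rfl | ⟨_, rfl, rfl | ⟨_, rfl, rfl⟩⟩⟩ <;> simp_all
  · rcases List.infix_append_append_of_length_le (q := [2, 3, 4]) habcd (by simp) (by simp) with
      h | h | ⟨l₁, l₂, h₁, h₂, he, hl₁, hl₂⟩
    · exact hs.rise_of_strict_drop a b c d h
    · exact ht.rise_of_strict_drop a b c d h
    simp only [List.suffix_cons_iff, List.prefix_cons_iff, List.suffix_nil, List.prefix_nil] at hl₁ hl₂
    rcases hl₁ with rfl | rfl | rfl | rfl <;>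
      rcases hl₂ with rfl | ⟨_, rfl, rfl | ⟨_, rfl, rfl | ⟨_, rfl, rfl⟩⟩⟩ <;> simp_all

end ZWWShape

theorem not_zwwShape_abba (a b : ℕ) : ¬ZWWShape [a, b, b, a] := fun h => by
  have := h.rise_of_drop a b b ⟨[], [a], rfl⟩
  have := h.rise_of_drop b b a ⟨[a], [], rfl⟩
  omega

theorem not_zwwShape_abcba (a b c : ℕ) : ¬ZWWShape [a, b, c, b, a] := fun h => by
  have := h.step a b ⟨[], [c, b, a], rfl⟩
  have := h.step b a ⟨[a, b, c], [], rfl⟩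
  have := h.step c b ⟨[a, b], [a], rfl⟩
  have := h.rise_of_drop a b c ⟨[], [b, a], rfl⟩
  have := h.rise_of_drop c b a ⟨[a, b], [], rfl⟩
  have := h.rise_of_strict_drop a b c b ⟨[], [a], rfl⟩
  have := h.rise_of_strict_drop b c b a ⟨[a], [], rfl⟩
  omega

theorem ZWWShape.length_le_three_of_palindrome {u : List ℕ} (h : ZWWShape u)
    (hu : u.Palindrome) : u.length ≤ 3 := by
  induction hu with
  | nil | singleton => simp
  | cons_concat x hl ih =>
    have hl3 := ih (h.of_infix ⟨[x], [x], by simp⟩)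
    cases hl with
    | nil | singleton => simp
    | cons_concat y hm =>
      cases hm with
      | nil => exact (not_zwwShape_abba x y (by simpa using h)).elim
      | singleton z => exact (not_zwwShape_abcba x y z (by simpa using h)).elim
      | cons_concat => simp at hl3 ⊢; omega

theorem zwwShape_W_three : ZWWShape (W 3) := by
  refine ⟨fun a b h => ?_, fun a b c h => ?_, fun a b c d h => ?_⟩ <;>
    simp [W, phi, List.infix_cons_iff, List.prefix_cons_iff] at h <;> omega

theorem zwwShape_W (n : ℕ) : ZWWShape (W n) := by
  induction n using Nat.strong_induction_on with
  | _ n ih =>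
    rcases Nat.lt_or_ge n 4 with hn | hn
    · exact zwwShape_W_three.of_infix (W_prefix_of_le (by omega)).isInfix
    obtain ⟨m, rfl⟩ := Nat.exists_eq_add_of_le' hn
    obtain ⟨v, x, hv, hx⟩ := exists_W_add_two_eq_append (m + 1)
    obtain ⟨t, ht⟩ := exists_W_add_two_eq_cons m
    have hs := ih (m + 3) (by omega)
    have ht' := (ih (m + 2) (by omega)).map_add_two
    rw [hv] at hs
    rw [ht] at ht'
    simpa [W_add_two (m + 2), hv, ht] using hs.append (y := m + 2) ht' hx (by omega)

def palindromesW (i : ℕ) : Finset (List ℕ) :=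
  ((Finset.range (i + 1)).image fun x => [x]) ∪
  ((Finset.range ((i - 1) / 2)).image fun j => [2 * j + 2, 2 * j + 2]) ∪
  ((Finset.range ((i - 2) / 2)).image fun j => [2 * j + 2, 2 * j + 3, 2 * j + 2]) ∪
  ((Finset.range ((i - 2) / 2)).image fun j => [2 * j + 3, 2 * j + 2, 2 * j + 3])

theorem card_palindromesW (i : ℕ) :
    (palindromesW i).card = (i + 1) + (i - 1) / 2 + 2 * ((i - 2) / 2) := by
  rw [palindromesW, Finset.card_union_of_disjoint, Finset.card_union_of_disjoint,
    Finset.card_union_of_disjoint, Finset.card_image_of_injective, Finset.card_image_of_injective,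
    Finset.card_image_of_injective, Finset.card_image_of_injective]
  all_goals simp [Function.Injective, Finset.disjoint_left]
  all_goals grind

theorem mem_palindromesW_of_infix_W {i : ℕ} {u : List ℕ} (hne : u ≠ []) (hu : u <:+: W i)
    (hp : u.Palindrome) : u ∈ palindromesW i := by
  have hshape := (zwwShape_W i).of_infix hu
  simp only [palindromesW, Finset.mem_union, Finset.mem_image, Finset.mem_range]
  rcases hp with _ | x | ⟨x, _ | y | ⟨y, hm⟩⟩
  · exact absurd rfl hne
  · have := le_of_mem_W ((List.singleton_infix_iff _ _).mp hu)
    exact Or.inl (Or.inl (Or.inl ⟨x, by omega, rfl⟩))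
  · have := hshape.step x x ⟨[], [], rfl⟩
    have := lt_of_pair_infix_W hu
    exact Or.inl (Or.inl (Or.inr ⟨x / 2 - 1, by omega, by simp; omega⟩))
  · have := hshape.step x y ⟨[], [x], rfl⟩
    have := hshape.step y x ⟨[x], [], rfl⟩
    have := hshape.rise_of_drop x y x ⟨[], [], rfl⟩
    have := lt_of_pair_infix_W (List.IsInfix.trans ⟨[], [x], rfl⟩ hu)
    have := lt_of_pair_infix_W (List.IsInfix.trans ⟨[x], [], rfl⟩ hu)
    by_cases hxy : y = x + 1
    · exact Or.inl (Or.inr ⟨x / 2 - 1, by omega, by simp; omega⟩)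
    · exact Or.inr ⟨y / 2 - 1, by omega, by simp; omega⟩
  · have := hshape.length_le_three_of_palindrome (.cons_concat x (.cons_concat y hm))
    simp at this; omega

theorem setOf_palindrome_infix_W (i : ℕ) :
    {u : List ℕ | u ≠ [] ∧ u <:+: W i ∧ u.reverse = u} = palindromesW i := by
  ext u
  refine ⟨fun ⟨hne, hu, hrev⟩ => mem_palindromesW_of_infix_W hne hu (.of_reverse_eq hrev),
    fun h => ?_⟩
  simp only [palindromesW, Finset.coe_union, Finset.coe_image, Finset.coe_range, Set.mem_union,
    Set.mem_image, Set.mem_Iio] at h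
  rcases h with (((⟨x, hx, rfl⟩ | ⟨j, hj, rfl⟩) | ⟨j, hj, rfl⟩) | ⟨j, hj, rfl⟩)
  · exact ⟨by simp, (List.singleton_infix_iff _ _).mpr (mem_W (by omega)), rfl⟩
  · have := map_add_two_mul_infix_W (show [2, 2] <:+: W 3 by decide) (k := j) (i := i) (by omega)
    exact ⟨by simp, by simpa [add_comm] using this, rfl⟩
  · have := map_add_two_mul_infix_W (show [2, 3, 2] <:+: W 4 by decide) (k := j) (i := i) (by omega)
    exact ⟨by simp, by simpa [add_comm] using this, rfl⟩
  · have := map_add_two_mul_infix_W (show [3, 2, 3] <:+: W 4 by decide) (k := j) (i := i) (by omega)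
    exact ⟨by simp, by simpa [add_comm] using this, rfl⟩

/-- For all `i ≥ 3`, the number of distinct nonempty palindromic factors of `W i`
equals `⌊5i/2⌋ - 2`. -/
theorem zww_distinct_palindromes : ∀ i : ℕ, 3 ≤ i →
    {u : List ℕ | u ≠ [] ∧ u <:+: W i ∧ u.reverse = u}.ncard = 5 * i / 2 - 2 := by
  intro i hi
  rw [setOf_palindrome_infix_W, Set.ncard_coe_finset, card_palindromesW]
  rcases Nat.even_or_odd' i with ⟨k, rfl | rfl⟩ <;> omega
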